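/- arXiv:1903.06545 — 9 statements merged into one kernel-verified Lean document; each statement's English description precedes it below -/
import Mathlib

section
/- For nonnegative reals x1,...,x5 and y1,...,y5, with A = (x1^{10} + x2^8 + x3^6 + x4^4 + x5^2)^{1/10} and B defined analogously from the yi, one has 252 x1^5 y1^5 + 70 x2^4 y2^4 + 20 x3^3 y3^3 + 6 x4^2 y4^2 + 2 x5 y5 ≤ 252 A^5 B^5. -/
/-!
With `u = (x1^5, x2^4, x3^3, x4^2, x5)` and `v` formed likewise from the `yi`, one has
`A^5 = √(∑ uᵢ²)` and `B^5 = √(∑ vᵢ²)`. Every coefficient on the left is at most `252`, so the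
claim is the Cauchy–Schwarz inequality `∑ |uᵢ vᵢ| ≤ √(∑ uᵢ²) √(∑ vᵢ²)` scaled by `252`.
-/

open Finset

theorem sum_mul_mul_le_mul_sqrt_mul_sqrt {ι : Type*} (s : Finset ι) (c u v : ι → ℝ) (C : ℝ)
    (hc : ∀ i ∈ s, |c i| ≤ C) :
    ∑ i ∈ s, c i * u i * v i ≤ C * (√(∑ i ∈ s, u i ^ 2) * √(∑ i ∈ s, v i ^ 2)) := by
  rcases s.eq_empty_or_nonempty with rfl | ⟨j, hj⟩
  · simp
  have hC : 0 ≤ C := (abs_nonneg _).trans (hc j hj)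
  calc ∑ i ∈ s, c i * u i * v i
      ≤ ∑ i ∈ s, C * (|u i| * |v i|) := by
        refine sum_le_sum fun i hi => ?_
        calc c i * u i * v i ≤ |c i * u i * v i| := le_abs_self _
          _ = |c i| * (|u i| * |v i|) := by rw [abs_mul, abs_mul, mul_assoc]
          _ ≤ C * (|u i| * |v i|) := by gcongr; exact hc i hi
    _ = C * ∑ i ∈ s, |u i| * |v i| := (mul_sum ..).symm
    _ ≤ C * (√(∑ i ∈ s, u i ^ 2) * √(∑ i ∈ s, v i ^ 2)) := by
        gcongr
        simpa only [sq_abs] using Real.sum_mul_le_sqrt_mul_sqrt s (fun i => |u i|) (fun i => |v i|)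

theorem rpow_one_div_two_mul_pow_eq_sqrt {a : ℝ} (ha : 0 ≤ a) {n : ℕ} (hn : n ≠ 0) :
    (a ^ (1 / (2 * n : ℝ))) ^ n = √a := by
  rw [← Real.rpow_natCast, ← Real.rpow_mul ha, Real.sqrt_eq_rpow]
  field_simp

theorem stmt_3_general (x1 x2 x3 x4 x5 y1 y2 y3 y4 y5 : ℝ) :
    252 * x1 ^ (5:ℕ) * y1 ^ (5:ℕ) + 70 * x2 ^ (4:ℕ) * y2 ^ (4:ℕ) +
    20 * x3 ^ (3:ℕ) * y3 ^ (3:ℕ) + 6 * x4 ^ (2:ℕ) * y4 ^ (2:ℕ) + 2 * x5 * y5 ≤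
    252 * ((x1 ^ (10:ℕ) + x2 ^ (8:ℕ) + x3 ^ (6:ℕ) + x4 ^ (4:ℕ) + x5 ^ (2:ℕ)) ^ ((1:ℝ)/10)) ^ (5:ℕ) *
    ((y1 ^ (10:ℕ) + y2 ^ (8:ℕ) + y3 ^ (6:ℕ) + y4 ^ (4:ℕ) + y5 ^ (2:ℕ)) ^ ((1:ℝ)/10)) ^ (5:ℕ) := by
  have hcs := sum_mul_mul_le_mul_sqrt_mul_sqrt univ ![252, 70, 20, 6, 2]
    ![x1 ^ 5, x2 ^ 4, x3 ^ 3, x4 ^ 2, x5] ![y1 ^ 5, y2 ^ 4, y3 ^ 3, y4 ^ 2, y5] 252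
    (by intro i _; fin_cases i <;> norm_num)
  simp only [Fin.sum_univ_five, Matrix.cons_val] at hcs
  have h10 : (1 : ℝ) / 10 = 1 / (2 * (5 : ℕ)) := by norm_num
  rw [h10, rpow_one_div_two_mul_pow_eq_sqrt (by positivity) (by norm_num),
    rpow_one_div_two_mul_pow_eq_sqrt (by positivity) (by norm_num)]
  refine hcs.trans_eq ?_
  ring_nf

theorem stmt_3 (x1 x2 x3 x4 x5 y1 y2 y3 y4 y5 : ℝ)
    (hx1 : 0 ≤ x1) (hx2 : 0 ≤ x2) (hx3 : 0 ≤ x3) (hx4 : 0 ≤ x4) (hx5 : 0 ≤ x5)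
    (hy1 : 0 ≤ y1) (hy2 : 0 ≤ y2) (hy3 : 0 ≤ y3) (hy4 : 0 ≤ y4) (hy5 : 0 ≤ y5) :
    252 * x1 ^ (5:ℕ) * y1 ^ (5:ℕ) + 70 * x2 ^ (4:ℕ) * y2 ^ (4:ℕ) +
    20 * x3 ^ (3:ℕ) * y3 ^ (3:ℕ) + 6 * x4 ^ (2:ℕ) * y4 ^ (2:ℕ) + 2 * x5 * y5 ≤
    252 * ((x1 ^ (10:ℕ) + x2 ^ (8:ℕ) + x3 ^ (6:ℕ) + x4 ^ (4:ℕ) + x5 ^ (2:ℕ)) ^ ((1:ℝ)/10)) ^ (5:ℕ) *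
    ((y1 ^ (10:ℕ) + y2 ^ (8:ℕ) + y3 ^ (6:ℕ) + y4 ^ (4:ℕ) + y5 ^ (2:ℕ)) ^ ((1:ℝ)/10)) ^ (5:ℕ) :=
  stmt_3_general x1 x2 x3 x4 x5 y1 y2 y3 y4 y5
end

section
/- For nonnegative reals x1, x2, x3, y1, y2, y3, with A = (x1^{10} + x2^8 + x3^6)^{1/10} and B = (y1^{10} + y2^8 + y3^6)^{1/10}, one has 120 x1^7 y1^3 + 120 x1^3 y1^7 + 56 x2^5 y2^3 + 56 x2^3 y2^5 + 15 x3^4 y3^2 + 15 x3^2 y3^4 ≤ 120 A^7 B^3 + 120 A^3 B^7. -/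
/-! Put `A ^ 10 = x1 ^ 10 + x2 ^ 8 + x3 ^ 6`, `B ^ 10 = y1 ^ 10 + y2 ^ 8 + y3 ^ 6` and multiply
through by `A ^ 10 * B ^ 10`. In the coordinate of degree `m = 10, 8, 6` the two mixed terms are
bounded by weighted AM-GM with natural weights: e.g. `x ^ 5 * y ^ 3 * A ^ 10 * B ^ 10` is the
geometric mean of `x ^ 8 * A ^ 7 * B ^ 13`, `y ^ 8 * A ^ 17 * B ^ 3`, `y ^ 8 * A ^ 13 * B ^ 7`
with weights `10 : 3 : 3`. Every coordinate's bound is dominated by the same linear form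
`P * x ^ m + Q * y ^ m`, where `P = 84 * A ^ 7 * B ^ 13 + 36 * A ^ 3 * B ^ 17` and
`Q = 36 * A ^ 17 * B ^ 3 + 84 * A ^ 13 * B ^ 7`, so the sum over the coordinates is at most
`P * A ^ 10 + Q * B ^ 10 = (120 * A ^ 7 * B ^ 3 + 120 * A ^ 3 * B ^ 7) * A ^ 10 * B ^ 10`. -/

theorem rpow_div_natCast_pow {u : ℝ} (hu : 0 ≤ u) (p : ℕ) {n : ℕ} (hn : n ≠ 0) :
    (u ^ ((p : ℝ) / n)) ^ n = u ^ p := by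
  rw [← Real.rpow_natCast _ n, ← Real.rpow_mul hu, div_mul_cancel₀ _ (Nat.cast_ne_zero.2 hn),
    Real.rpow_natCast]

theorem geom_mean_le_arith_mean3_nat_weighted (u v w c : ℝ) (p q r : ℕ) {n : ℕ} (hn : n ≠ 0)
    (hpqr : p + q + r = n) (hu : 0 ≤ u) (hv : 0 ≤ v) (hw : 0 ≤ w) (hc : 0 ≤ c)
    (h : c ^ n = u ^ p * v ^ q * w ^ r) :
    n * c ≤ p * u + q * v + r * w := by
  have hn' : (n : ℝ) ≠ 0 := Nat.cast_ne_zero.2 hn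
  have hc_eq : c = u ^ ((p : ℝ) / n) * v ^ ((q : ℝ) / n) * w ^ ((r : ℝ) / n) := by
    refine (pow_left_inj₀ hc (by positivity) hn).1 ?_
    rw [mul_pow, mul_pow, rpow_div_natCast_pow hu p hn, rpow_div_natCast_pow hv q hn,
      rpow_div_natCast_pow hw r hn, h]
  have hweights : (p : ℝ) / n + q / n + r / n = 1 := by
    rw [← add_div, ← add_div, div_eq_one_iff_eq hn']
    exact_mod_cast hpqr
  have amgm := Real.geom_mean_le_arith_mean3_weighted (by positivity) (by positivity)
    (by positivity) hu hv hw hweights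
  rw [← hc_eq] at amgm
  calc n * c ≤ n * ((p : ℝ) / n * u + q / n * v + r / n * w) := by gcongr
    _ = p * u + q * v + r * w := by field_simp

theorem eq_zero_of_pow_add_pow_add_pow_eq_zero {a b c : ℝ} {k l m : ℕ}
    (ha : 0 ≤ a) (hb : 0 ≤ b) (hc : 0 ≤ c) (h : a ^ k + b ^ l + c ^ m = 0)
    (hk : k ≠ 0) (hl : l ≠ 0) (hm : m ≠ 0) :
    a = 0 ∧ b = 0 ∧ c = 0 := by
  rw [add_eq_zero_iff_of_nonneg (by positivity) (by positivity),
    add_eq_zero_iff_of_nonneg (by positivity) (by positivity)] at h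
  obtain ⟨⟨ha0, hb0⟩, hc0⟩ := h
  exact ⟨pow_eq_zero_iff hk |>.1 ha0, pow_eq_zero_iff hl |>.1 hb0, pow_eq_zero_iff hm |>.1 hc0⟩

section MixedTerms

variable {x y A B : ℝ}

theorem mixed_terms_deg10_le (hx : 0 ≤ x) (hy : 0 ≤ y) (hA : 0 ≤ A) (hB : 0 ≤ B) :
    (120 * x ^ 7 * y ^ 3 + 120 * x ^ 3 * y ^ 7) * (A ^ 10 * B ^ 10) ≤
      (84 * A ^ 7 * B ^ 13 + 36 * A ^ 3 * B ^ 17) * x ^ 10 +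
        (36 * A ^ 17 * B ^ 3 + 84 * A ^ 13 * B ^ 7) * y ^ 10 := by
  have hxy := geom_mean_le_arith_mean3_nat_weighted
    (x ^ 10 * A ^ 7 * B ^ 13) (y ^ 10 * A ^ 17 * B ^ 3) 0 (x ^ 7 * y ^ 3 * (A ^ 10 * B ^ 10))
    7 3 0 (by norm_num) rfl (by positivity) (by positivity) le_rfl (by positivity) (by ring)
  have hyx := geom_mean_le_arith_mean3_nat_weighted
    (y ^ 10 * A ^ 13 * B ^ 7) (x ^ 10 * A ^ 3 * B ^ 17) 0 (x ^ 3 * y ^ 7 * (A ^ 10 * B ^ 10))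
    7 3 0 (by norm_num) rfl (by positivity) (by positivity) le_rfl (by positivity) (by ring)
  push_cast at hxy hyx
  linarith

theorem mixed_terms_deg8_le (hx : 0 ≤ x) (hy : 0 ≤ y) (hA : 0 ≤ A) (hB : 0 ≤ B) :
    (56 * x ^ 5 * y ^ 3 + 56 * x ^ 3 * y ^ 5) * (A ^ 10 * B ^ 10) ≤
      (84 * A ^ 7 * B ^ 13 + 36 * A ^ 3 * B ^ 17) * x ^ 8 +
        (36 * A ^ 17 * B ^ 3 + 84 * A ^ 13 * B ^ 7) * y ^ 8 := by
  have hxy := geom_mean_le_arith_mean3_nat_weighted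
    (x ^ 8 * A ^ 7 * B ^ 13) (y ^ 8 * A ^ 17 * B ^ 3) (y ^ 8 * A ^ 13 * B ^ 7)
    (x ^ 5 * y ^ 3 * (A ^ 10 * B ^ 10)) 10 3 3 (by norm_num) rfl
    (by positivity) (by positivity) (by positivity) (by positivity) (by ring)
  have hyx := geom_mean_le_arith_mean3_nat_weighted
    (y ^ 8 * A ^ 13 * B ^ 7) (x ^ 8 * A ^ 3 * B ^ 17) (x ^ 8 * A ^ 7 * B ^ 13)
    (x ^ 3 * y ^ 5 * (A ^ 10 * B ^ 10)) 10 3 3 (by norm_num) rfl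
    (by positivity) (by positivity) (by positivity) (by positivity) (by ring)
  push_cast at hxy hyx
  have : 0 ≤ x ^ 8 * A ^ 7 * B ^ 13 := by positivity
  have : 0 ≤ x ^ 8 * A ^ 3 * B ^ 17 := by positivity
  have : 0 ≤ y ^ 8 * A ^ 17 * B ^ 3 := by positivity
  have : 0 ≤ y ^ 8 * A ^ 13 * B ^ 7 := by positivity
  linarith

theorem mixed_terms_deg6_le (hA : 0 ≤ A) (hB : 0 ≤ B) :
    (15 * x ^ 4 * y ^ 2 + 15 * x ^ 2 * y ^ 4) * (A ^ 10 * B ^ 10) ≤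
      (84 * A ^ 7 * B ^ 13 + 36 * A ^ 3 * B ^ 17) * x ^ 6 +
        (36 * A ^ 17 * B ^ 3 + 84 * A ^ 13 * B ^ 7) * y ^ 6 := by
  have hxy := geom_mean_le_arith_mean3_nat_weighted
    (x ^ 6 * A ^ 7 * B ^ 13) (y ^ 6 * A ^ 17 * B ^ 3) (y ^ 6 * A ^ 13 * B ^ 7)
    (x ^ 4 * y ^ 2 * (A ^ 10 * B ^ 10)) 8 3 1 (by norm_num) rfl
    (by positivity) (by positivity) (by positivity) (by positivity) (by ring)
  have hyx := geom_mean_le_arith_mean3_nat_weighted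
    (y ^ 6 * A ^ 13 * B ^ 7) (x ^ 6 * A ^ 3 * B ^ 17) (x ^ 6 * A ^ 7 * B ^ 13)
    (x ^ 2 * y ^ 4 * (A ^ 10 * B ^ 10)) 8 3 1 (by norm_num) rfl
    (by positivity) (by positivity) (by positivity) (by positivity) (by ring)
  push_cast at hxy hyx
  have : 0 ≤ x ^ 6 * A ^ 7 * B ^ 13 := by positivity
  have : 0 ≤ x ^ 6 * A ^ 3 * B ^ 17 := by positivity
  have : 0 ≤ y ^ 6 * A ^ 17 * B ^ 3 := by positivity
  have : 0 ≤ y ^ 6 * A ^ 13 * B ^ 7 := by positivity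
  linarith

end MixedTerms

theorem mixed_terms_le_of_pow_ten_eq {x1 x2 x3 y1 y2 y3 A B : ℝ}
    (hx1 : 0 ≤ x1) (hx2 : 0 ≤ x2) (hx3 : 0 ≤ x3)
    (hy1 : 0 ≤ y1) (hy2 : 0 ≤ y2) (hy3 : 0 ≤ y3) (hA : 0 ≤ A) (hB : 0 ≤ B)
    (hA10 : A ^ 10 = x1 ^ 10 + x2 ^ 8 + x3 ^ 6) (hB10 : B ^ 10 = y1 ^ 10 + y2 ^ 8 + y3 ^ 6) :
    120 * x1 ^ 7 * y1 ^ 3 + 120 * x1 ^ 3 * y1 ^ 7 + 56 * x2 ^ 5 * y2 ^ 3 + 56 * x2 ^ 3 * y2 ^ 5 +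
      15 * x3 ^ 4 * y3 ^ 2 + 15 * x3 ^ 2 * y3 ^ 4 ≤
      120 * A ^ 7 * B ^ 3 + 120 * A ^ 3 * B ^ 7 := by
  obtain rfl | hA_pos := hA.eq_or_lt
  · obtain ⟨rfl, rfl, rfl⟩ := eq_zero_of_pow_add_pow_add_pow_eq_zero hx1 hx2 hx3
      (by simpa using hA10.symm) (by norm_num) (by norm_num) (by norm_num)
    simp
  obtain rfl | hB_pos := hB.eq_or_lt
  · obtain ⟨rfl, rfl, rfl⟩ := eq_zero_of_pow_add_pow_add_pow_eq_zero hy1 hy2 hy3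
      (by simpa using hB10.symm) (by norm_num) (by norm_num) (by norm_num)
    simp
  refine le_of_mul_le_mul_right ?_ (by positivity : 0 < A ^ 10 * B ^ 10)
  linear_combination mixed_terms_deg10_le hx1 hy1 hA hB + mixed_terms_deg8_le hx2 hy2 hA hB +
    mixed_terms_deg6_le (x := x3) (y := y3) hA hB -
    (84 * A ^ 7 * B ^ 13 + 36 * A ^ 3 * B ^ 17) * hA10 -
    (36 * A ^ 17 * B ^ 3 + 84 * A ^ 13 * B ^ 7) * hB10

theorem stmt_4 (x1 x2 x3 y1 y2 y3 : ℝ)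
    (hx1 : 0 ≤ x1) (hx2 : 0 ≤ x2) (hx3 : 0 ≤ x3)
    (hy1 : 0 ≤ y1) (hy2 : 0 ≤ y2) (hy3 : 0 ≤ y3) :
    120 * x1 ^ (7:ℕ) * y1 ^ (3:ℕ) + 120 * x1 ^ (3:ℕ) * y1 ^ (7:ℕ) +
    56 * x2 ^ (5:ℕ) * y2 ^ (3:ℕ) + 56 * x2 ^ (3:ℕ) * y2 ^ (5:ℕ) +
    15 * x3 ^ (4:ℕ) * y3 ^ (2:ℕ) + 15 * x3 ^ (2:ℕ) * y3 ^ (4:ℕ) ≤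
    120 * ((x1 ^ (10:ℕ) + x2 ^ (8:ℕ) + x3 ^ (6:ℕ)) ^ ((1:ℝ)/10)) ^ (7:ℕ) *
      ((y1 ^ (10:ℕ) + y2 ^ (8:ℕ) + y3 ^ (6:ℕ)) ^ ((1:ℝ)/10)) ^ (3:ℕ) +
    120 * ((x1 ^ (10:ℕ) + x2 ^ (8:ℕ) + x3 ^ (6:ℕ)) ^ ((1:ℝ)/10)) ^ (3:ℕ) *
      ((y1 ^ (10:ℕ) + y2 ^ (8:ℕ) + y3 ^ (6:ℕ)) ^ ((1:ℝ)/10)) ^ (7:ℕ) := by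
  have root_pow_ten {s : ℝ} (hs : 0 ≤ s) : (s ^ ((1 : ℝ) / 10)) ^ 10 = s := by
    simpa using rpow_div_natCast_pow hs 1 (n := 10) (by norm_num)
  have ha : 0 ≤ x1 ^ 10 + x2 ^ 8 + x3 ^ 6 := by positivity
  have hb : 0 ≤ y1 ^ 10 + y2 ^ 8 + y3 ^ 6 := by positivity
  exact mixed_terms_le_of_pow_ten_eq hx1 hx2 hx3 hy1 hy2 hy3 (Real.rpow_nonneg ha _)
    (Real.rpow_nonneg hb _) (root_pow_ten ha) (root_pow_ten hb)
end

section
/- For nonnegative reals x1, x2, x4, y1, y2, y4, with A = (x1^{10} + x2^8 + x4^4)^{1/10} and B = (y1^{10} + y2^8 + y4^4)^{1/10}, one has 45 x1^8 y1^2 + 45 x1^2 y1^8 + 28 x2^6 y2^2 + 28 x2^2 y2^6 + 4 x4^3 y4 + 4 x4 y4^3 ≤ 45 A^8 B^2 + 45 A^2 B^8. -/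
/-!
Put `a = (x1^10, x2^8, x4^4)`, `b = (y1^10, y2^8, y4^4)` and `φ(s, t) = s^(4/5) t^(1/5) + s^(1/5) t^(4/5)`.
The right-hand side is `45 φ(∑ a, ∑ b)`, and by Hölder's inequality `φ` is superadditive, so it is
at least `45 ∑ φ(a i, b i)`. The first summand is exactly `45 (x1^8 y1^2 + x1^2 y1^8)`. For the
others, `φ(u^4, v^4) ≥ u^3 v + u v^3` (two-variable Muirhead: `(16/5, 4/5)` majorizes `(3, 1)`),
used with `u = x2^2` and `u = x4`.
-/

open Real Finset

theorem Real.sum_rpow_mul_rpow_le_of_add_eq_one {ι : Type*} (s : Finset ι) {a b : ι → ℝ}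
    {θ η : ℝ} (hθ : 0 < θ) (hη : 0 < η) (hθη : θ + η = 1)
    (ha : ∀ i ∈ s, 0 ≤ a i) (hb : ∀ i ∈ s, 0 ≤ b i) :
    ∑ i ∈ s, a i ^ θ * b i ^ η ≤ (∑ i ∈ s, a i) ^ θ * (∑ i ∈ s, b i) ^ η := by
  have h := inner_le_Lp_mul_Lq_of_nonneg s (HolderConjugate.inv_inv hθ hη hθη)
    (fun i hi ↦ rpow_nonneg (ha i hi) θ) (fun i hi ↦ rpow_nonneg (hb i hi) η)
  rwa [sum_congr rfl fun i hi ↦ rpow_rpow_inv (ha i hi) hθ.ne',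
    sum_congr rfl fun i hi ↦ rpow_rpow_inv (hb i hi) hη.ne', one_div, one_div, inv_inv,
    inv_inv] at h

theorem Real.rpow_mul_rpow_add_add_le_of_add_eq_one {a₁ a₂ a₃ b₁ b₂ b₃ θ η : ℝ}
    (hθ : 0 < θ) (hη : 0 < η) (hθη : θ + η = 1)
    (ha₁ : 0 ≤ a₁) (ha₂ : 0 ≤ a₂) (ha₃ : 0 ≤ a₃) (hb₁ : 0 ≤ b₁) (hb₂ : 0 ≤ b₂) (hb₃ : 0 ≤ b₃) :
    a₁ ^ θ * b₁ ^ η + a₂ ^ θ * b₂ ^ η + a₃ ^ θ * b₃ ^ η ≤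
      (a₁ + a₂ + a₃) ^ θ * (b₁ + b₂ + b₃) ^ η := by
  have h := sum_rpow_mul_rpow_le_of_add_eq_one univ (a := ![a₁, a₂, a₃]) (b := ![b₁, b₂, b₃])
    hθ hη hθη (by simp [Fin.forall_fin_succ, *]) (by simp [Fin.forall_fin_succ, *])
  simpa only [Fin.sum_univ_three, Matrix.cons_val] using h

theorem Real.pow_rpow_eq_pow {x : ℝ} (hx : 0 ≤ x) {n m : ℕ} {r : ℝ} (h : n * r = m) :
    (x ^ n) ^ r = x ^ m := by
  rw [← rpow_natCast_mul hx, h, rpow_natCast]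

theorem Real.rpow_pow_eq_rpow {x : ℝ} (hx : 0 ≤ x) {r s : ℝ} {n : ℕ} (h : r * n = s) :
    (x ^ r) ^ n = x ^ s := by
  rw [← rpow_mul_natCast hx, h]

theorem pow_mul_pow_add_le_of_le {R : Type*} [CommRing R] [LinearOrder R] [IsStrictOrderedRing R]
    {s t : R} (hs : 0 ≤ s) (ht : 0 ≤ t) {p q : ℕ} (hqp : q ≤ p) :
    s ^ p * t ^ (q + 1) + s ^ (q + 1) * t ^ p ≤ s ^ (p + 1) * t ^ q + s ^ q * t ^ (p + 1) := by
  obtain ⟨k, rfl⟩ := Nat.exists_eq_add_of_le hqp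
  have hmono : 0 ≤ (s ^ k - t ^ k) * (s - t) := by
    rcases le_total s t with hst | hts
    · exact mul_nonneg_of_nonpos_of_nonpos (sub_nonpos.2 (pow_le_pow_left₀ hs hst k))
        (sub_nonpos.2 hst)
    · exact mul_nonneg (sub_nonneg.2 (pow_le_pow_left₀ ht hts k)) (sub_nonneg.2 hts)
  have hdiff : s ^ (q + k + 1) * t ^ q + s ^ q * t ^ (q + k + 1)
      - (s ^ (q + k) * t ^ (q + 1) + s ^ (q + 1) * t ^ (q + k))
      = s ^ q * t ^ q * ((s ^ k - t ^ k) * (s - t)) := by ring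
  have := mul_nonneg (mul_nonneg (pow_nonneg hs q) (pow_nonneg ht q)) hmono
  linarith

theorem pow_three_mul_add_mul_pow_three_le {u v : ℝ} (hu : 0 ≤ u) (hv : 0 ≤ v) :
    u ^ 3 * v + u * v ^ 3 ≤
      (u ^ 4) ^ (4 / 5 : ℝ) * (v ^ 4) ^ (1 / 5 : ℝ) +
        (u ^ 4) ^ (1 / 5 : ℝ) * (v ^ 4) ^ (4 / 5 : ℝ) := by
  have fifth_root : ∀ x : ℝ, 0 ≤ x → ∃ y, 0 ≤ y ∧ x = y ^ 5 := fun x hx ↦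
    ⟨x ^ ((5 : ℕ) : ℝ)⁻¹, by positivity, (rpow_inv_natCast_pow hx (by norm_num)).symm⟩
  obtain ⟨s, hs, rfl⟩ := fifth_root u hu
  obtain ⟨t, ht, rfl⟩ := fifth_root v hv
  simp only [← pow_mul]
  rw [pow_rpow_eq_pow hs (r := 4 / 5) (m := 16) (by norm_num),
    pow_rpow_eq_pow hs (r := 1 / 5) (m := 4) (by norm_num),
    pow_rpow_eq_pow ht (r := 4 / 5) (m := 16) (by norm_num),
    pow_rpow_eq_pow ht (r := 1 / 5) (m := 4) (by norm_num)]
  calc s ^ (5 * 3) * t ^ 5 + s ^ 5 * t ^ (5 * 3)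
      = s ^ 15 * t ^ (4 + 1) + s ^ (4 + 1) * t ^ 15 := by ring
    _ ≤ s ^ (15 + 1) * t ^ 4 + s ^ 4 * t ^ (15 + 1) := pow_mul_pow_add_le_of_le hs ht (by norm_num)
    _ = s ^ 16 * t ^ 4 + s ^ 4 * t ^ 16 := by ring

theorem stmt_5 (x1 x2 x4 y1 y2 y4 : ℝ)
    (hx1 : 0 ≤ x1) (hx2 : 0 ≤ x2) (hx4 : 0 ≤ x4)
    (hy1 : 0 ≤ y1) (hy2 : 0 ≤ y2) (hy4 : 0 ≤ y4) :
    45 * x1 ^ (8:ℕ) * y1 ^ (2:ℕ) + 45 * x1 ^ (2:ℕ) * y1 ^ (8:ℕ) +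
    28 * x2 ^ (6:ℕ) * y2 ^ (2:ℕ) + 28 * x2 ^ (2:ℕ) * y2 ^ (6:ℕ) +
    4 * x4 ^ (3:ℕ) * y4 + 4 * x4 * y4 ^ (3:ℕ) ≤
    45 * ((x1 ^ (10:ℕ) + x2 ^ (8:ℕ) + x4 ^ (4:ℕ)) ^ ((1:ℝ)/10)) ^ (8:ℕ) *
      ((y1 ^ (10:ℕ) + y2 ^ (8:ℕ) + y4 ^ (4:ℕ)) ^ ((1:ℝ)/10)) ^ (2:ℕ) +
    45 * ((x1 ^ (10:ℕ) + x2 ^ (8:ℕ) + x4 ^ (4:ℕ)) ^ ((1:ℝ)/10)) ^ (2:ℕ) *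
      ((y1 ^ (10:ℕ) + y2 ^ (8:ℕ) + y4 ^ (4:ℕ)) ^ ((1:ℝ)/10)) ^ (8:ℕ) := by
  have hS : 0 ≤ x1 ^ 10 + x2 ^ 8 + x4 ^ 4 := by positivity
  have hT : 0 ≤ y1 ^ 10 + y2 ^ 8 + y4 ^ 4 := by positivity
  rw [rpow_pow_eq_rpow hS (n := 8) (s := 4 / 5) (by norm_num),
    rpow_pow_eq_rpow hS (n := 2) (s := 1 / 5) (by norm_num),
    rpow_pow_eq_rpow hT (n := 8) (s := 4 / 5) (by norm_num),
    rpow_pow_eq_rpow hT (n := 2) (s := 1 / 5) (by norm_num)]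
  have holder_xy := rpow_mul_rpow_add_add_le_of_add_eq_one (θ := 4 / 5) (η := 1 / 5)
    (by norm_num) (by norm_num) (by norm_num) (pow_nonneg hx1 10) (pow_nonneg hx2 8)
    (pow_nonneg hx4 4) (pow_nonneg hy1 10) (pow_nonneg hy2 8) (pow_nonneg hy4 4)
  have holder_yx := rpow_mul_rpow_add_add_le_of_add_eq_one (θ := 4 / 5) (η := 1 / 5)
    (by norm_num) (by norm_num) (by norm_num) (pow_nonneg hy1 10) (pow_nonneg hy2 8)
    (pow_nonneg hy4 4) (pow_nonneg hx1 10) (pow_nonneg hx2 8) (pow_nonneg hx4 4)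
  have coord1 : ∀ {u v : ℝ}, 0 ≤ u → 0 ≤ v →
      (u ^ 10) ^ (4 / 5 : ℝ) * (v ^ 10) ^ (1 / 5 : ℝ) = u ^ 8 * v ^ 2 := fun hu hv ↦ by
    rw [pow_rpow_eq_pow hu (m := 8) (by norm_num), pow_rpow_eq_pow hv (m := 2) (by norm_num)]
  rw [coord1 hx1 hy1] at holder_xy
  rw [coord1 hy1 hx1] at holder_yx
  have coord2 := pow_three_mul_add_mul_pow_three_le (pow_nonneg hx2 2) (pow_nonneg hy2 2)
  simp only [← pow_mul, Nat.reduceMul] at coord2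
  have coord4 := pow_three_mul_add_mul_pow_three_le hx4 hy4
  have h2 : 0 ≤ x2 ^ 6 * y2 ^ 2 + x2 ^ 2 * y2 ^ 6 := by positivity
  have h4 : 0 ≤ x4 ^ 3 * y4 + x4 * y4 ^ 3 := by positivity
  linarith
end

section
/- For nonnegative reals x1, x2, x3, y1, y2, y3, with A = (x1^{10} + x2^8 + x3^6)^{1/10} and B = (y1^{10} + y2^8 + y3^6)^{1/10}, one has 10 x1^9 y1 + 10 x1 y1^9 + 8 x2^7 y2 + 8 x2 y2^7 + 6 x3^5 y3 + 6 x3 y3^5 ≤ 10 A^9 B + 10 A B^9. -/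
/-!
Write `a = x ^ p`, `b = y ^ p`. For `2 ≤ p ≤ q`, substituting `x = u ^ q`, `y = v ^ q` turns
`x ^ (p - 1) * y + x * y ^ (p - 1) ≤ a ^ (1 - 1/q) * b ^ (1/q) + a ^ (1/q) * b ^ (1 - 1/q)` into the
two-variable Muirhead inequality for the exponent pairs `(q(p-1), q) ≺ (p(q-1), p)`. Summing over
the coordinates, Hölder's inequality says that `(a, b) ↦ a ^ w * b ^ (1 - w)` is superadditive,
which bounds the sum of the right-hand sides by `q (A ^ (q-1) B + A B ^ (q-1))`.
-/

open Finset

theorem Real.sum_rpow_mul_rpow_one_sub_le {ι : Type*} (s : Finset ι) {a b : ι → ℝ}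
    (ha : ∀ i ∈ s, 0 ≤ a i) (hb : ∀ i ∈ s, 0 ≤ b i) {w : ℝ} (hw₀ : 0 < w) (hw₁ : w < 1) :
    ∑ i ∈ s, a i ^ w * b i ^ (1 - w) ≤ (∑ i ∈ s, a i) ^ w * (∑ i ∈ s, b i) ^ (1 - w) := by
  have holder := Real.inner_le_Lp_mul_Lq_of_nonneg s
    (Real.HolderConjugate.inv_one_sub_inv hw₀ hw₁)
    (fun i hi => Real.rpow_nonneg (ha i hi) w) (fun i hi => Real.rpow_nonneg (hb i hi) (1 - w))
  have hpow : ∀ {t : ℝ} (c : ι → ℝ), (∀ i ∈ s, 0 ≤ c i) → 0 < t →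
      ∑ i ∈ s, (c i ^ t) ^ t⁻¹ = ∑ i ∈ s, c i := fun c hc ht =>
    sum_congr rfl fun i hi => Real.rpow_rpow_inv (hc i hi) ht.ne'
  simpa only [one_div, inv_inv, hpow a ha hw₀, hpow b hb (sub_pos.2 hw₁)] using holder

theorem pow_mul_pow_add_pow_mul_pow_le_of_add_eq {u v : ℝ} (hu : 0 ≤ u) (hv : 0 ≤ v)
    {a b c d : ℕ} (h : a + b = c + d) (hda : d ≤ a) (hdb : d ≤ b) :
    u ^ a * v ^ b + u ^ b * v ^ a ≤ u ^ c * v ^ d + u ^ d * v ^ c := by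
  obtain ⟨α, rfl⟩ := Nat.exists_eq_add_of_le hda
  obtain ⟨β, rfl⟩ := Nat.exists_eq_add_of_le hdb
  obtain rfl : c = d + α + β := by omega
  have hsame_sign : 0 ≤ (u ^ α - v ^ α) * (u ^ β - v ^ β) := by
    rcases le_total u v with h | h
    · exact mul_nonneg_of_nonpos_of_nonpos
        (sub_nonpos.2 (pow_le_pow_left₀ hu h α)) (sub_nonpos.2 (pow_le_pow_left₀ hu h β))
    · exact mul_nonneg
        (sub_nonneg.2 (pow_le_pow_left₀ hv h α)) (sub_nonneg.2 (pow_le_pow_left₀ hv h β))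
  have hdiff : u ^ (d + α + β) * v ^ d + u ^ d * v ^ (d + α + β) -
      (u ^ (d + α) * v ^ (d + β) + u ^ (d + β) * v ^ (d + α)) =
        (u * v) ^ d * ((u ^ α - v ^ α) * (u ^ β - v ^ β)) := by ring
  rw [← sub_nonneg, hdiff]
  exact mul_nonneg (pow_nonneg (mul_nonneg hu hv) d) hsame_sign

theorem pow_rpow_eq_pow_of_mul_eq {u : ℝ} (hu : 0 ≤ u) {n m : ℕ} {r : ℝ} (h : n * r = m) :
    (u ^ n) ^ r = u ^ m := by
  rw [← Real.rpow_natCast_mul hu, h, Real.rpow_natCast]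

theorem mul_pow_sub_one_mul_add_le {p q : ℕ} (hp : 2 ≤ p) (hpq : p ≤ q) {x y : ℝ}
    (hx : 0 ≤ x) (hy : 0 ≤ y) :
    p * (x ^ (p - 1) * y + x * y ^ (p - 1)) ≤
      q * ((x ^ p) ^ (1 - (q : ℝ)⁻¹) * (y ^ p) ^ (q : ℝ)⁻¹ +
        (x ^ p) ^ (q : ℝ)⁻¹ * (y ^ p) ^ (1 - (q : ℝ)⁻¹)) := by
  have hq : q ≠ 0 := by omega
  have hroot : ∀ {z : ℝ}, 0 ≤ z → ∃ w, 0 ≤ w ∧ z = w ^ q := fun hz =>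
    ⟨_, Real.rpow_nonneg hz _, (Real.rpow_inv_natCast_pow hz hq).symm⟩
  obtain ⟨u, hu, rfl⟩ := hroot hx
  obtain ⟨v, hv, rfl⟩ := hroot hy
  have hpow : ∀ {w r : ℝ} (n : ℕ), 0 ≤ w → (q * p : ℕ) * r = n → ((w ^ q) ^ p) ^ r = w ^ n :=
    fun n hw h => by rw [← pow_mul]; exact pow_rpow_eq_pow_of_mul_eq hw h
  have hexp : ((q * p : ℕ) : ℝ) * (1 - (q : ℝ)⁻¹) = (p * (q - 1) : ℕ) := by
    push_cast [Nat.one_le_iff_ne_zero.2 hq]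
    field_simp
  have hexp' : ((q * p : ℕ) : ℝ) * (q : ℝ)⁻¹ = p := by
    push_cast
    field_simp
  rw [hpow _ hu hexp, hpow _ hv hexp, hpow _ hu hexp', hpow _ hv hexp', ← pow_mul, ← pow_mul]
  have hmuirhead := pow_mul_pow_add_pow_mul_pow_le_of_add_eq hu hv
    (a := q * (p - 1)) (c := p * (q - 1))
    (by zify [show 1 ≤ p by omega, show 1 ≤ q by omega]; ring)
    (hpq.trans (Nat.le_mul_of_pos_right q (by omega))) hpq
  calc (p : ℝ) * (u ^ (q * (p - 1)) * v ^ q + u ^ q * v ^ (q * (p - 1)))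
      ≤ q * (u ^ (q * (p - 1)) * v ^ q + u ^ q * v ^ (q * (p - 1))) := by gcongr
    _ ≤ q * (u ^ (p * (q - 1)) * v ^ p + u ^ p * v ^ (p * (q - 1))) :=
        mul_le_mul_of_nonneg_left hmuirhead (Nat.cast_nonneg q)

theorem sum_mul_pow_sub_one_mul_add_le {ι : Type*} (s : Finset ι) (p : ι → ℕ) {q : ℕ}
    (hp : ∀ i ∈ s, 2 ≤ p i) (hpq : ∀ i ∈ s, p i ≤ q) (hq : 2 ≤ q) {x y : ι → ℝ}
    (hx : ∀ i ∈ s, 0 ≤ x i) (hy : ∀ i ∈ s, 0 ≤ y i) :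
    ∑ i ∈ s, p i * (x i ^ (p i - 1) * y i + x i * y i ^ (p i - 1)) ≤
      q * (((∑ i ∈ s, x i ^ p i) ^ (q : ℝ)⁻¹) ^ (q - 1) * (∑ i ∈ s, y i ^ p i) ^ (q : ℝ)⁻¹ +
        (∑ i ∈ s, x i ^ p i) ^ (q : ℝ)⁻¹ * ((∑ i ∈ s, y i ^ p i) ^ (q : ℝ)⁻¹) ^ (q - 1)) := by
  set r : ℝ := (q : ℝ)⁻¹
  have hr₀ : 0 < r := by positivity
  have hr₁ : r < 1 := inv_lt_one_of_one_lt₀ (by exact_mod_cast hq)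
  have ha : ∀ i ∈ s, 0 ≤ x i ^ p i := fun i hi => pow_nonneg (hx i hi) _
  have hb : ∀ i ∈ s, 0 ≤ y i ^ p i := fun i hi => pow_nonneg (hy i hi) _
  have hroot_pow : ∀ {z : ℝ}, 0 ≤ z → (z ^ r) ^ (q - 1) = z ^ (1 - r) := fun hz => by
    rw [← Real.rpow_natCast, ← Real.rpow_mul hz]
    congr 1
    push_cast [show 1 ≤ q by omega]
    rw [mul_sub, mul_one, inv_mul_cancel₀ (by positivity)]
  rw [hroot_pow (sum_nonneg ha), hroot_pow (sum_nonneg hb)]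
  calc ∑ i ∈ s, p i * (x i ^ (p i - 1) * y i + x i * y i ^ (p i - 1))
      ≤ ∑ i ∈ s, q * ((x i ^ p i) ^ (1 - r) * (y i ^ p i) ^ r +
          (x i ^ p i) ^ r * (y i ^ p i) ^ (1 - r)) :=
        sum_le_sum fun i hi => mul_pow_sub_one_mul_add_le (hp i hi) (hpq i hi) (hx i hi) (hy i hi)
    _ = q * (∑ i ∈ s, (x i ^ p i) ^ (1 - r) * (y i ^ p i) ^ (1 - (1 - r)) +
          ∑ i ∈ s, (x i ^ p i) ^ r * (y i ^ p i) ^ (1 - r)) := by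
        rw [← mul_sum, sum_add_distrib, sub_sub_cancel]
    _ ≤ q * ((∑ i ∈ s, x i ^ p i) ^ (1 - r) * (∑ i ∈ s, y i ^ p i) ^ (1 - (1 - r)) +
          (∑ i ∈ s, x i ^ p i) ^ r * (∑ i ∈ s, y i ^ p i) ^ (1 - r)) := by
        gcongr
        · exact Real.sum_rpow_mul_rpow_one_sub_le s ha hb (by linarith) (by linarith)
        · exact Real.sum_rpow_mul_rpow_one_sub_le s ha hb hr₀ hr₁
    _ = _ := by rw [sub_sub_cancel]

theorem stmt_6 (x1 x2 x3 y1 y2 y3 : ℝ)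
    (hx1 : 0 ≤ x1) (hx2 : 0 ≤ x2) (hx3 : 0 ≤ x3)
    (hy1 : 0 ≤ y1) (hy2 : 0 ≤ y2) (hy3 : 0 ≤ y3) :
    10 * x1 ^ (9:ℕ) * y1 + 10 * x1 * y1 ^ (9:ℕ) +
    8 * x2 ^ (7:ℕ) * y2 + 8 * x2 * y2 ^ (7:ℕ) +
    6 * x3 ^ (5:ℕ) * y3 + 6 * x3 * y3 ^ (5:ℕ) ≤
    10 * ((x1 ^ (10:ℕ) + x2 ^ (8:ℕ) + x3 ^ (6:ℕ)) ^ ((1:ℝ)/10)) ^ (9:ℕ) *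
      ((y1 ^ (10:ℕ) + y2 ^ (8:ℕ) + y3 ^ (6:ℕ)) ^ ((1:ℝ)/10)) +
    10 * ((x1 ^ (10:ℕ) + x2 ^ (8:ℕ) + x3 ^ (6:ℕ)) ^ ((1:ℝ)/10)) *
      ((y1 ^ (10:ℕ) + y2 ^ (8:ℕ) + y3 ^ (6:ℕ)) ^ ((1:ℝ)/10)) ^ (9:ℕ) := by
  have h := sum_mul_pow_sub_one_mul_add_le univ ![10, 8, 6] (q := 10)
    (by decide) (by decide) (by norm_num) (x := ![x1, x2, x3]) (y := ![y1, y2, y3])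
    (by simp [Fin.forall_fin_succ, *]) (by simp [Fin.forall_fin_succ, *])
  norm_num [Fin.sum_univ_three, Matrix.cons_val_two] at h
  convert h using 1 <;> ring
end

section
/- For all nonnegative reals x1,...,x5, y1,...,y5: ((x1+y1)^{10} + (x2+y2)^8 + (x3+y3)^6 + (x4+y4)^4 + (x5+y5)^2)^{1/10} ≤ (x1^{10}+x2^8+x3^6+x4^4+x5^2)^{1/10} + (y1^{10}+y2^8+y3^6+y4^4+y5^2)^{1/10}. -/
/-!
Write `N x = (∑ xᵢ ^ dᵢ) ^ (1 / D)` with `dᵢ ≤ D`, and take `a > N x`, `b > N y`. Splitting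
`x + y = λ (x / λ) + μ (y / μ)` with `λ = a / (a + b)`, `μ = b / (a + b)`, convexity of each
`t ↦ t ^ dᵢ` gives `∑ (xᵢ + yᵢ) ^ dᵢ ≤ λ ∑ (xᵢ / λ) ^ dᵢ + μ ∑ (yᵢ / μ) ^ dᵢ`. Since `1 / λ ≥ 1` and
`dᵢ ≤ D`, the dilation costs at most a factor `λ ^ (-D)`, so the right side is at most
`λ ^ (1 - D) a ^ D + μ ^ (1 - D) b ^ D = (a + b) ^ D`. Letting `a ↓ N x`, `b ↓ N y` gives the
triangle inequality, also when `N x` or `N y` vanishes.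
-/

open Finset

variable {ι : Type*}

noncomputable def homogeneousNorm [Fintype ι] (d : ι → ℕ) (D : ℕ) (x : ι → ℝ) : ℝ :=
  (∑ i, x i ^ d i) ^ ((1 : ℝ) / D)

lemma mul_pow_le_pow_mul {t u : ℝ} (ht : 1 ≤ t) (hu : 0 ≤ u) {d D : ℕ} (hdD : d ≤ D) :
    (t * u) ^ d ≤ t ^ D * u ^ d := by
  rw [mul_pow]
  gcongr

lemma add_pow_le_of_le {u v a b : ℝ} (hu : 0 ≤ u) (hv : 0 ≤ v) (ha : 0 < a) (hb : 0 < b)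
    {d D : ℕ} (hdD : d ≤ D) :
    (u + v) ^ d ≤
      a / (a + b) * ((a + b) / a) ^ D * u ^ d + b / (a + b) * ((a + b) / b) ^ D * v ^ d := by
  have hab : 0 < a + b := by positivity
  have hweights : a / (a + b) + b / (a + b) = 1 := by field_simp
  calc (u + v) ^ d
      = (a / (a + b) * ((a + b) / a * u) + b / (a + b) * ((a + b) / b * v)) ^ d := by
        congr 1; field_simp
    _ ≤ a / (a + b) * ((a + b) / a * u) ^ d + b / (a + b) * ((a + b) / b * v) ^ d :=
        (convexOn_pow d).2 (Set.mem_Ici.2 (by positivity)) (Set.mem_Ici.2 (by positivity))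
          (by positivity) (by positivity) hweights
    _ ≤ _ := by
        rw [mul_assoc, mul_assoc (b / (a + b))]
        gcongr
        · exact mul_pow_le_pow_mul ((one_le_div ha).2 (by linarith)) hu hdD
        · exact mul_pow_le_pow_mul ((one_le_div hb).2 (by linarith)) hv hdD

lemma sum_add_pow_le (s : Finset ι) (d : ι → ℕ) {D : ℕ} (hdD : ∀ i ∈ s, d i ≤ D)
    {x y : ι → ℝ} (hx : ∀ i ∈ s, 0 ≤ x i) (hy : ∀ i ∈ s, 0 ≤ y i) {a b : ℝ} (ha : 0 < a)
    (hb : 0 < b) (hxa : ∑ i ∈ s, x i ^ d i ≤ a ^ D) (hyb : ∑ i ∈ s, y i ^ d i ≤ b ^ D) :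
    ∑ i ∈ s, (x i + y i) ^ d i ≤ (a + b) ^ D := by
  set α := a / (a + b) * ((a + b) / a) ^ D
  set β := b / (a + b) * ((a + b) / b) ^ D
  calc ∑ i ∈ s, (x i + y i) ^ d i
      ≤ ∑ i ∈ s, (α * x i ^ d i + β * y i ^ d i) :=
        sum_le_sum fun i hi ↦ add_pow_le_of_le (hx i hi) (hy i hi) ha hb (hdD i hi)
    _ = α * ∑ i ∈ s, x i ^ d i + β * ∑ i ∈ s, y i ^ d i := by
        rw [sum_add_distrib, mul_sum, mul_sum]
    _ ≤ α * a ^ D + β * b ^ D := by gcongr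
    _ = (a + b) ^ D := by
        simp only [α, β, div_pow]
        field_simp

lemma homogeneousNorm_le_iff [Fintype ι] {d : ι → ℕ} {D : ℕ} (hD : 0 < D)
    {x : ι → ℝ} (hx : 0 ≤ x) {a : ℝ} (ha : 0 ≤ a) :
    homogeneousNorm d D x ≤ a ↔ ∑ i, x i ^ d i ≤ a ^ D := by
  rw [homogeneousNorm, one_div, Real.rpow_inv_le_iff_of_pos
    (sum_nonneg fun i _ ↦ pow_nonneg (hx i) _) ha (by exact_mod_cast hD), Real.rpow_natCast]

lemma homogeneousNorm_nonneg [Fintype ι] (d : ι → ℕ) (D : ℕ) {x : ι → ℝ}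
    (hx : 0 ≤ x) : 0 ≤ homogeneousNorm d D x :=
  Real.rpow_nonneg (sum_nonneg fun i _ ↦ pow_nonneg (hx i) _) _

theorem homogeneousNorm_add_le [Fintype ι] {d : ι → ℕ} {D : ℕ} (hD : 0 < D)
    (hdD : ∀ i, d i ≤ D) {x y : ι → ℝ} (hx : 0 ≤ x) (hy : 0 ≤ y) :
    homogeneousNorm d D (x + y) ≤ homogeneousNorm d D x + homogeneousNorm d D y := by
  have hxN := homogeneousNorm_nonneg d D hx
  have hyN := homogeneousNorm_nonneg d D hy
  refine le_of_forall_pos_le_add fun ε hε ↦ ?_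
  have hxε : ∑ i, x i ^ d i ≤ (homogeneousNorm d D x + ε / 2) ^ D :=
    (homogeneousNorm_le_iff hD hx (by positivity)).1 (by linarith)
  have hyε : ∑ i, y i ^ d i ≤ (homogeneousNorm d D y + ε / 2) ^ D :=
    (homogeneousNorm_le_iff hD hy (by positivity)).1 (by linarith)
  rw [homogeneousNorm_le_iff hD (add_nonneg hx hy) (by positivity)]
  calc ∑ i, (x + y) i ^ d i
      ≤ (homogeneousNorm d D x + ε / 2 + (homogeneousNorm d D y + ε / 2)) ^ D :=
        sum_add_pow_le univ d (fun i _ ↦ hdD i) (fun i _ ↦ hx i) (fun i _ ↦ hy i)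
          (by positivity) (by positivity) hxε hyε
    _ = (homogeneousNorm d D x + homogeneousNorm d D y + ε) ^ D := by ring

theorem stmt_7 (x1 x2 x3 x4 x5 y1 y2 y3 y4 y5 : ℝ)
    (hx1 : 0 ≤ x1) (hx2 : 0 ≤ x2) (hx3 : 0 ≤ x3) (hx4 : 0 ≤ x4) (hx5 : 0 ≤ x5)
    (hy1 : 0 ≤ y1) (hy2 : 0 ≤ y2) (hy3 : 0 ≤ y3) (hy4 : 0 ≤ y4) (hy5 : 0 ≤ y5) :
    ((x1 + y1) ^ (10:ℕ) + (x2 + y2) ^ (8:ℕ) + (x3 + y3) ^ (6:ℕ) + (x4 + y4) ^ (4:ℕ) +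
      (x5 + y5) ^ (2:ℕ)) ^ ((1:ℝ)/10) ≤
    (x1 ^ (10:ℕ) + x2 ^ (8:ℕ) + x3 ^ (6:ℕ) + x4 ^ (4:ℕ) + x5 ^ (2:ℕ)) ^ ((1:ℝ)/10) +
    (y1 ^ (10:ℕ) + y2 ^ (8:ℕ) + y3 ^ (6:ℕ) + y4 ^ (4:ℕ) + y5 ^ (2:ℕ)) ^ ((1:ℝ)/10) := by
  have hx : (0 : Fin 5 → ℝ) ≤ ![x1, x2, x3, x4, x5] := by
    intro i; fin_cases i <;> assumption
  have hy : (0 : Fin 5 → ℝ) ≤ ![y1, y2, y3, y4, y5] := by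
    intro i; fin_cases i <;> assumption
  have h := homogeneousNorm_add_le (d := ![10, 8, 6, 4, 2]) (D := 10) (by norm_num)
    (by decide) hx hy
  simpa [homogeneousNorm, Fin.sum_univ_five] using h
end

section
/- For all nonnegative reals x1, x2, x3, x4, y1, y2, y3, y4: ((x1+y1)^8 + (x2+y2)^6 + (x3+y3)^4 + (x4+y4)^2)^{1/8} ≤ (x1^8+x2^6+x3^4+x4^2)^{1/8} + (y1^8+y2^6+y3^4+y4^2)^{1/8}. -/
/-!
Write `x_i ^ r_i = (x_i ^ (r_i / p)) ^ p`. Since `r_i / p ≤ 1`, the map `t ↦ t ^ (r_i / p)` is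
subadditive, so the left side is bounded by the `ℓ^p` norm of the sum of the vectors
`(x_i ^ (r_i / p))` and `(y_i ^ (r_i / p))`, and Minkowski's inequality in `ℓ^p` finishes.
Here `p = 8` and `r = (8, 6, 4, 2)`.
-/

open Finset

namespace Real

theorem add_rpow_le_add_rpow_div_rpow {a b r p : ℝ} (ha : 0 ≤ a) (hb : 0 ≤ b)
    (hr : 0 ≤ r) (hrp : r ≤ p) :
    (a + b) ^ r ≤ (a ^ (r / p) + b ^ (r / p)) ^ p := by
  rcases hr.eq_or_lt with rfl | hr
  · norm_num
    exact one_le_rpow one_le_two hrp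
  have hp : 0 < p := hr.trans_le hrp
  calc (a + b) ^ r = ((a + b) ^ (r / p)) ^ p := by
        rw [← rpow_mul (add_nonneg ha hb), div_mul_cancel₀ r hp.ne']
    _ ≤ (a ^ (r / p) + b ^ (r / p)) ^ p := by
        gcongr
        exact rpow_add_le_add_rpow ha hb (div_nonneg hr.le hp.le) ((div_le_one hp).2 hrp)

theorem Lp_add_le_of_nonneg_of_exponent_le {ι : Type*} (s : Finset ι) {x y r : ι → ℝ} {p : ℝ}
    (hp : 1 ≤ p) (hx : ∀ i ∈ s, 0 ≤ x i) (hy : ∀ i ∈ s, 0 ≤ y i)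
    (hr : ∀ i ∈ s, 0 ≤ r i) (hrp : ∀ i ∈ s, r i ≤ p) :
    (∑ i ∈ s, (x i + y i) ^ r i) ^ (1 / p) ≤
      (∑ i ∈ s, x i ^ r i) ^ (1 / p) + (∑ i ∈ s, y i ^ r i) ^ (1 / p) := by
  have hp0 : 0 < p := zero_lt_one.trans_le hp
  have rpow_eq : ∀ z : ι → ℝ, (∀ i ∈ s, 0 ≤ z i) →
      ∑ i ∈ s, z i ^ r i = ∑ i ∈ s, (z i ^ (r i / p)) ^ p := fun z hz =>
    sum_congr rfl fun i hi => by rw [← rpow_mul (hz i hi), div_mul_cancel₀ _ hp0.ne']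
  calc (∑ i ∈ s, (x i + y i) ^ r i) ^ (1 / p)
      ≤ (∑ i ∈ s, (x i ^ (r i / p) + y i ^ (r i / p)) ^ p) ^ (1 / p) := by
        gcongr with i hi
        · exact sum_nonneg fun i hi => rpow_nonneg (add_nonneg (hx i hi) (hy i hi)) _
        · exact add_rpow_le_add_rpow_div_rpow (hx i hi) (hy i hi) (hr i hi) (hrp i hi)
    _ ≤ (∑ i ∈ s, (x i ^ (r i / p)) ^ p) ^ (1 / p) + (∑ i ∈ s, (y i ^ (r i / p)) ^ p) ^ (1 / p) :=
        Lp_add_le_of_nonneg s hp (fun i hi => rpow_nonneg (hx i hi) _)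
          (fun i hi => rpow_nonneg (hy i hi) _)
    _ = (∑ i ∈ s, x i ^ r i) ^ (1 / p) + (∑ i ∈ s, y i ^ r i) ^ (1 / p) := by
        rw [rpow_eq x hx, rpow_eq y hy]

end Real

theorem stmt_8 (x1 x2 x3 x4 y1 y2 y3 y4 : ℝ)
    (hx1 : 0 ≤ x1) (hx2 : 0 ≤ x2) (hx3 : 0 ≤ x3) (hx4 : 0 ≤ x4)
    (hy1 : 0 ≤ y1) (hy2 : 0 ≤ y2) (hy3 : 0 ≤ y3) (hy4 : 0 ≤ y4) :
    ((x1 + y1) ^ (8:ℕ) + (x2 + y2) ^ (6:ℕ) + (x3 + y3) ^ (4:ℕ) + (x4 + y4) ^ (2:ℕ)) ^ ((1:ℝ)/8) ≤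
    (x1 ^ (8:ℕ) + x2 ^ (6:ℕ) + x3 ^ (4:ℕ) + x4 ^ (2:ℕ)) ^ ((1:ℝ)/8) +
    (y1 ^ (8:ℕ) + y2 ^ (6:ℕ) + y3 ^ (4:ℕ) + y4 ^ (2:ℕ)) ^ ((1:ℝ)/8) := by
  have key := Real.Lp_add_le_of_nonneg_of_exponent_le univ (x := ![x1, x2, x3, x4])
    (y := ![y1, y2, y3, y4]) (r := ![8, 6, 4, 2]) (p := 8) (by norm_num)
    (by simp [Fin.forall_fin_succ, *]) (by simp [Fin.forall_fin_succ, *])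
    (by simp [Fin.forall_fin_succ]) (by simp [Fin.forall_fin_succ]; norm_num)
  simpa [Fin.sum_univ_four, Real.rpow_ofNat] using key
end

section
/- For all nonnegative reals x1, x2, x3, y1, y2, y3: ((x1+y1)^6 + (x2+y2)^4 + (x3+y3)^2)^{1/6} ≤ (x1^6+x2^4+x3^2)^{1/6} + (y1^6+y2^4+y3^2)^{1/6}. -/
/-! Put `a = (∑ xᵢ^pᵢ)^(1/n)` and `b = (∑ yᵢ^pᵢ)^(1/n)`. Jensen for `t ↦ t^p` with weights
`a/(a+b)` and `b/(a+b)` gives `((x+y)/(a+b))^p ≤ a/(a+b)·(x/a)^p + b/(a+b)·(y/b)^p`, and since `p ≤ n`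
the remaining factor `(a+b)^(n-p)` may be traded for `a^(n-p)` resp. `b^(n-p)`. Summing over the
coordinates yields `∑ (xᵢ+yᵢ)^pᵢ ≤ (a+b)^n`. -/

open Finset

lemma add_pow_div_le {p n : ℕ} (hpn : p ≤ n) {x y a b : ℝ} (hx : 0 ≤ x) (hy : 0 ≤ y)
    (ha : 0 < a) (hb : 0 < b) :
    (x + y) ^ p / (a + b) ^ n ≤ a / (a + b) * (x ^ p / a ^ n) + b / (a + b) * (y ^ p / b ^ n) := by
  obtain ⟨k, rfl⟩ := Nat.exists_eq_add_of_le hpn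
  have hab : 0 < a + b := add_pos ha hb
  have jensen : ((x + y) / (a + b)) ^ p ≤ a / (a + b) * (x / a) ^ p + b / (a + b) * (y / b) ^ p := by
    have h := (convexOn_pow p).2 (Set.mem_Ici.mpr (div_nonneg hx ha.le))
      (Set.mem_Ici.mpr (div_nonneg hy hb.le)) (div_nonneg ha.le hab.le) (div_nonneg hb.le hab.le)
      (by field_simp)
    have hmix : a / (a + b) * (x / a) + b / (a + b) * (y / b) = (x + y) / (a + b) := by
      field_simp
    simpa only [smul_eq_mul, hmix] using h
  calc (x + y) ^ p / (a + b) ^ (p + k) = ((x + y) / (a + b)) ^ p / (a + b) ^ k := by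
        rw [pow_add, div_pow, div_div]
    _ ≤ (a / (a + b) * (x / a) ^ p + b / (a + b) * (y / b) ^ p) / (a + b) ^ k := by gcongr
    _ = a / (a + b) * ((x / a) ^ p / (a + b) ^ k) + b / (a + b) * ((y / b) ^ p / (a + b) ^ k) := by
        ring
    _ ≤ a / (a + b) * ((x / a) ^ p / a ^ k) + b / (a + b) * ((y / b) ^ p / b ^ k) := by
        gcongr <;> linarith
    _ = a / (a + b) * (x ^ p / a ^ (p + k)) + b / (a + b) * (y ^ p / b ^ (p + k)) := by
        rw [pow_add, pow_add, div_pow, div_pow, div_div, div_div]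

lemma sum_add_pow_le_add_pow {ι : Type*} (s : Finset ι) (p : ι → ℕ) {n : ℕ}
    (hp : ∀ i ∈ s, p i ≤ n) {x y : ι → ℝ} (hx : ∀ i ∈ s, 0 ≤ x i) (hy : ∀ i ∈ s, 0 ≤ y i)
    {a b : ℝ} (ha : 0 < a) (hb : 0 < b)
    (hxa : ∑ i ∈ s, x i ^ p i ≤ a ^ n) (hyb : ∑ i ∈ s, y i ^ p i ≤ b ^ n) :
    ∑ i ∈ s, (x i + y i) ^ p i ≤ (a + b) ^ n := by
  have hab : 0 < a + b := add_pos ha hb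
  rw [← div_le_one (pow_pos hab n), sum_div]
  calc ∑ i ∈ s, (x i + y i) ^ p i / (a + b) ^ n
      ≤ ∑ i ∈ s, (a / (a + b) * (x i ^ p i / a ^ n) + b / (a + b) * (y i ^ p i / b ^ n)) :=
        sum_le_sum fun i hi => add_pow_div_le (hp i hi) (hx i hi) (hy i hi) ha hb
    _ = a / (a + b) * ((∑ i ∈ s, x i ^ p i) / a ^ n)
        + b / (a + b) * ((∑ i ∈ s, y i ^ p i) / b ^ n) := by
        rw [sum_add_distrib, ← mul_sum, ← mul_sum, ← sum_div, ← sum_div]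
    _ ≤ a / (a + b) * 1 + b / (a + b) * 1 := by
        gcongr
        · exact (div_le_one (pow_pos ha n)).2 hxa
        · exact (div_le_one (pow_pos hb n)).2 hyb
    _ = 1 := by field_simp

theorem rpow_sum_add_pow_le {ι : Type*} (s : Finset ι) (p : ι → ℕ) {n : ℕ} (hn : n ≠ 0)
    (hp : ∀ i ∈ s, p i ≤ n) {x y : ι → ℝ} (hx : ∀ i ∈ s, 0 ≤ x i) (hy : ∀ i ∈ s, 0 ≤ y i) :
    (∑ i ∈ s, (x i + y i) ^ p i) ^ (n⁻¹ : ℝ) ≤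
      (∑ i ∈ s, x i ^ p i) ^ (n⁻¹ : ℝ) + (∑ i ∈ s, y i ^ p i) ^ (n⁻¹ : ℝ) := by
  set A := ∑ i ∈ s, x i ^ p i
  set B := ∑ i ∈ s, y i ^ p i
  have hA : 0 ≤ A := sum_nonneg fun i hi => pow_nonneg (hx i hi) _
  have hB : 0 ≤ B := sum_nonneg fun i hi => pow_nonneg (hy i hi) _
  have le_pow_rpow_add {C : ℝ} (hC : 0 ≤ C) {δ : ℝ} (hδ : 0 < δ) : C ≤ (C ^ (n⁻¹ : ℝ) + δ) ^ n :=
    calc C = (C ^ (n⁻¹ : ℝ)) ^ n := (Real.rpow_inv_natCast_pow hC hn).symm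
      _ ≤ (C ^ (n⁻¹ : ℝ) + δ) ^ n := by gcongr; linarith
  refine le_of_forall_pos_le_add fun ε hε => ?_
  have ha : 0 < A ^ (n⁻¹ : ℝ) + ε / 2 := by positivity
  have hb : 0 < B ^ (n⁻¹ : ℝ) + ε / 2 := by positivity
  calc (∑ i ∈ s, (x i + y i) ^ p i) ^ (n⁻¹ : ℝ)
      ≤ ((A ^ (n⁻¹ : ℝ) + ε / 2 + (B ^ (n⁻¹ : ℝ) + ε / 2)) ^ n) ^ (n⁻¹ : ℝ) := by
        gcongr
        · exact sum_nonneg fun i hi => pow_nonneg (add_nonneg (hx i hi) (hy i hi)) _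
        · exact sum_add_pow_le_add_pow s p hp hx hy ha hb
            (le_pow_rpow_add hA (half_pos hε)) (le_pow_rpow_add hB (half_pos hε))
    _ = A ^ (n⁻¹ : ℝ) + B ^ (n⁻¹ : ℝ) + ε := by
        rw [Real.pow_rpow_inv_natCast (add_pos ha hb).le hn]
        ring

theorem stmt_9 (x1 x2 x3 y1 y2 y3 : ℝ)
    (hx1 : 0 ≤ x1) (hx2 : 0 ≤ x2) (hx3 : 0 ≤ x3)
    (hy1 : 0 ≤ y1) (hy2 : 0 ≤ y2) (hy3 : 0 ≤ y3) :
    ((x1 + y1) ^ (6:ℕ) + (x2 + y2) ^ (4:ℕ) + (x3 + y3) ^ (2:ℕ)) ^ ((1:ℝ)/6) ≤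
    (x1 ^ (6:ℕ) + x2 ^ (4:ℕ) + x3 ^ (2:ℕ)) ^ ((1:ℝ)/6) +
    (y1 ^ (6:ℕ) + y2 ^ (4:ℕ) + y3 ^ (2:ℕ)) ^ ((1:ℝ)/6) := by
  have h := rpow_sum_add_pow_le univ ![6, 4, 2] (n := 6) (by norm_num)
    (by simp [Fin.forall_fin_succ]) (x := ![x1, x2, x3]) (y := ![y1, y2, y3])
    (by simp [Fin.forall_fin_succ, *]) (by simp [Fin.forall_fin_succ, *])
  simpa [Fin.sum_univ_three, one_div] using h
end

section
/- Let V1,...,V5 be real inner product spaces. For X = (v1,...,v5) in V1 × ⋯ × V5 define ‖X‖ = (‖v1‖^{10} + ‖v2‖^8 + ‖v3‖^6 + ‖v4‖^4 + ‖v5‖^2)^{1/10}. Then ‖X + Y‖ ≤ ‖X‖ + ‖Y‖ for all X, Y in V1 × ⋯ × V5. -/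
/-! For `n ≤ 10` the gauge `v ↦ ‖v‖ ^ (n / 10)` is subadditive, being a concave power of a norm,
and `‖v‖ ^ n` is its tenth power. The quantity in question is therefore the `ℓ¹⁰` norm of the
vector of gauges `(‖v₁‖, ‖v₂‖ ^ (8/10), …, ‖v₅‖ ^ (2/10))`, and the triangle inequality follows
from Minkowski's inequality in `ℓ¹⁰` together with its monotonicity in each coordinate. -/

open Real Finset

lemma norm_add_rpow_le {E : Type*} [SeminormedAddGroup E] (x y : E) {t : ℝ}
    (ht₀ : 0 ≤ t) (ht₁ : t ≤ 1) : ‖x + y‖ ^ t ≤ ‖x‖ ^ t + ‖y‖ ^ t :=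
  calc ‖x + y‖ ^ t ≤ (‖x‖ + ‖y‖) ^ t := rpow_le_rpow (norm_nonneg _) (norm_add_le x y) ht₀
    _ ≤ ‖x‖ ^ t + ‖y‖ ^ t := by
      exact_mod_cast NNReal.rpow_add_le_add_rpow ‖x‖₊ ‖y‖₊ ht₀ ht₁

lemma rpow_div_rpow_eq_pow {a : ℝ} (ha : 0 ≤ a) (n : ℕ) {p : ℝ} (hp : p ≠ 0) :
    (a ^ ((n : ℝ) / p)) ^ p = a ^ n := by
  rw [← rpow_mul ha, div_mul_cancel₀ _ hp, rpow_natCast]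

lemma Lp_le_Lp_add_Lp_of_le_add {ι : Type*} (s : Finset ι) {f g h : ι → ℝ} {p : ℝ} (hp : 1 ≤ p)
    (hf : ∀ i ∈ s, 0 ≤ f i) (hg : ∀ i ∈ s, 0 ≤ g i) (hh : ∀ i ∈ s, 0 ≤ h i)
    (hfg : ∀ i ∈ s, h i ≤ f i + g i) :
    (∑ i ∈ s, h i ^ p) ^ (1 / p) ≤ (∑ i ∈ s, f i ^ p) ^ (1 / p) + (∑ i ∈ s, g i ^ p) ^ (1 / p) := by
  have hp₀ : 0 ≤ p := by linarith
  refine le_trans ?_ (Real.Lp_add_le_of_nonneg s hp hf hg)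
  refine rpow_le_rpow (sum_nonneg fun i hi ↦ rpow_nonneg (hh i hi) _) ?_ (by positivity)
  exact sum_le_sum fun i hi ↦ rpow_le_rpow (hh i hi) (hfg i hi) hp₀

theorem stmt_10_general
    (V1 V2 V3 V4 V5 : Type*)
    [NormedAddCommGroup V1]
    [NormedAddCommGroup V2]
    [NormedAddCommGroup V3]
    [NormedAddCommGroup V4]
    [NormedAddCommGroup V5]
    (X Y : V1 × V2 × V3 × V4 × V5) :
    (‖(X + Y).1‖ ^ (10:ℕ) + ‖(X + Y).2.1‖ ^ (8:ℕ) + ‖(X + Y).2.2.1‖ ^ (6:ℕ) +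
      ‖(X + Y).2.2.2.1‖ ^ (4:ℕ) + ‖(X + Y).2.2.2.2‖ ^ (2:ℕ)) ^ ((1:ℝ)/10) ≤
    (‖X.1‖ ^ (10:ℕ) + ‖X.2.1‖ ^ (8:ℕ) + ‖X.2.2.1‖ ^ (6:ℕ) + ‖X.2.2.2.1‖ ^ (4:ℕ) +
      ‖X.2.2.2.2‖ ^ (2:ℕ)) ^ ((1:ℝ)/10) +
    (‖Y.1‖ ^ (10:ℕ) + ‖Y.2.1‖ ^ (8:ℕ) + ‖Y.2.2.1‖ ^ (6:ℕ) + ‖Y.2.2.2.1‖ ^ (4:ℕ) +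
      ‖Y.2.2.2.2‖ ^ (2:ℕ)) ^ ((1:ℝ)/10) := by
  let gauge (Z : V1 × V2 × V3 × V4 × V5) : Fin 5 → ℝ :=
    ![‖Z.1‖ ^ ((10 : ℕ) / 10 : ℝ), ‖Z.2.1‖ ^ ((8 : ℕ) / 10 : ℝ), ‖Z.2.2.1‖ ^ ((6 : ℕ) / 10 : ℝ),
      ‖Z.2.2.2.1‖ ^ ((4 : ℕ) / 10 : ℝ), ‖Z.2.2.2.2‖ ^ ((2 : ℕ) / 10 : ℝ)]
  have sum_gauge (Z : V1 × V2 × V3 × V4 × V5) :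
      ∑ i, gauge Z i ^ (10 : ℝ) = ‖Z.1‖ ^ (10:ℕ) + ‖Z.2.1‖ ^ (8:ℕ) + ‖Z.2.2.1‖ ^ (6:ℕ) +
        ‖Z.2.2.2.1‖ ^ (4:ℕ) + ‖Z.2.2.2.2‖ ^ (2:ℕ) := by
    simp only [Fin.sum_univ_five, gauge, Matrix.cons_val, rpow_div_rpow_eq_pow (norm_nonneg _) _
      (by norm_num : (10 : ℝ) ≠ 0)]
  have gauge_nonneg (Z : V1 × V2 × V3 × V4 × V5) : ∀ i ∈ univ, 0 ≤ gauge Z i := by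
    intro i _
    fin_cases i <;> exact rpow_nonneg (norm_nonneg _) _
  rw [← sum_gauge, ← sum_gauge, ← sum_gauge]
  refine Lp_le_Lp_add_Lp_of_le_add univ (by norm_num) (gauge_nonneg X) (gauge_nonneg Y)
    (gauge_nonneg (X + Y)) fun i _ ↦ ?_
  fin_cases i <;> exact norm_add_rpow_le _ _ (by norm_num) (by norm_num)

theorem stmt_10
    (V1 V2 V3 V4 V5 : Type*)
    [NormedAddCommGroup V1] [InnerProductSpace ℝ V1]
    [NormedAddCommGroup V2] [InnerProductSpace ℝ V2]
    [NormedAddCommGroup V3] [InnerProductSpace ℝ V3]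
    [NormedAddCommGroup V4] [InnerProductSpace ℝ V4]
    [NormedAddCommGroup V5] [InnerProductSpace ℝ V5]
    (X Y : V1 × V2 × V3 × V4 × V5) :
    (‖(X + Y).1‖ ^ (10:ℕ) + ‖(X + Y).2.1‖ ^ (8:ℕ) + ‖(X + Y).2.2.1‖ ^ (6:ℕ) +
      ‖(X + Y).2.2.2.1‖ ^ (4:ℕ) + ‖(X + Y).2.2.2.2‖ ^ (2:ℕ)) ^ ((1:ℝ)/10) ≤
    (‖X.1‖ ^ (10:ℕ) + ‖X.2.1‖ ^ (8:ℕ) + ‖X.2.2.1‖ ^ (6:ℕ) + ‖X.2.2.2.1‖ ^ (4:ℕ) +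
      ‖X.2.2.2.2‖ ^ (2:ℕ)) ^ ((1:ℝ)/10) +
    (‖Y.1‖ ^ (10:ℕ) + ‖Y.2.1‖ ^ (8:ℕ) + ‖Y.2.2.1‖ ^ (6:ℕ) + ‖Y.2.2.2.1‖ ^ (4:ℕ) +
      ‖Y.2.2.2.2‖ ^ (2:ℕ)) ^ ((1:ℝ)/10) :=
  stmt_10_general V1 V2 V3 V4 V5 X Y
end

section
/- Let V1, V2, V3 be real inner product spaces. Define ‖(v1,v2,v3)‖ = (‖v1‖^6 + ‖v2‖^4 + ‖v3‖^2)^{1/6}. Then this function satisfies the triangle inequality on V1 × V2 × V3. -/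
/-!
Each of `‖v₁‖`, `‖v₂‖`, `‖v₃‖` is subadditive on `V₁ × V₂ × V₃`, and subadditivity of nonnegative
functions survives two operations: `g ↦ g ^ r` for `0 ≤ r ≤ 1`, and `(f, g) ↦ (f ^ p + g ^ p) ^ (1/p)`
for `p ≥ 1` (Minkowski's inequality in `ℓᵖ` on two coordinates). Writing `g ^ q = (g ^ (q/p)) ^ p`,
this makes `(f ^ p + g ^ q) ^ (1/p)` subadditive whenever `0 ≤ q ≤ p`. Applying this first with
`(p, q) = (4, 2)` to `‖v₂‖, ‖v₃‖` and then with `(p, q) = (6, 4)` to `‖v₁‖` and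
`h = (‖v₂‖ ^ 4 + ‖v₃‖ ^ 2) ^ (1/4)` gives the triangle inequality.
-/

open Real

section Subadditive

variable {E : Type*} [Add E] {f g : E → ℝ}

theorem rpow_subadditive (hf0 : ∀ x, 0 ≤ f x) (hf : ∀ x y, f (x + y) ≤ f x + f y)
    {r : ℝ} (hr0 : 0 ≤ r) (hr1 : r ≤ 1) (x y : E) :
    f (x + y) ^ r ≤ f x ^ r + f y ^ r :=
  calc f (x + y) ^ r ≤ (f x + f y) ^ r := rpow_le_rpow (hf0 _) (hf x y) hr0
    _ ≤ f x ^ r + f y ^ r := rpow_add_le_add_rpow (hf0 x) (hf0 y) hr0 hr1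

theorem rpow_add_rpow_root_subadditive (hf0 : ∀ x, 0 ≤ f x) (hg0 : ∀ x, 0 ≤ g x)
    (hf : ∀ x y, f (x + y) ≤ f x + f y) (hg : ∀ x y, g (x + y) ≤ g x + g y)
    {p : ℝ} (hp : 1 ≤ p) (x y : E) :
    (f (x + y) ^ p + g (x + y) ^ p) ^ (1 / p) ≤
      (f x ^ p + g x ^ p) ^ (1 / p) + (f y ^ p + g y ^ p) ^ (1 / p) := by
  have hp0 : 0 ≤ p := zero_le_one.trans hp
  have minkowski := Lp_add_le_of_nonneg (s := Finset.univ) (f := ![f x, g x])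
    (g := ![f y, g y]) hp (by simp [Fin.forall_fin_two, hf0, hg0])
    (by simp [Fin.forall_fin_two, hf0, hg0])
  simp only [Fin.sum_univ_two, Matrix.cons_val_zero, Matrix.cons_val_one,
    Matrix.cons_val_fin_one] at minkowski
  refine le_trans (rpow_le_rpow ?_ ?_ (by positivity)) minkowski
  · exact add_nonneg (rpow_nonneg (hf0 _) _) (rpow_nonneg (hg0 _) _)
  gcongr
  exacts [hf0 _, hf x y, hg0 _, hg x y]

theorem rpow_add_rpow_root_subadditive_of_le (hf0 : ∀ x, 0 ≤ f x) (hg0 : ∀ x, 0 ≤ g x)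
    (hf : ∀ x y, f (x + y) ≤ f x + f y) (hg : ∀ x y, g (x + y) ≤ g x + g y)
    {p q : ℝ} (hp : 1 ≤ p) (hq0 : 0 ≤ q) (hqp : q ≤ p) (x y : E) :
    (f (x + y) ^ p + g (x + y) ^ q) ^ (1 / p) ≤
      (f x ^ p + g x ^ q) ^ (1 / p) + (f y ^ p + g y ^ q) ^ (1 / p) := by
  have hp0 : 0 < p := zero_lt_one.trans_le hp
  have hpow : ∀ z, g z ^ q = (g z ^ (q / p)) ^ p := fun z => by
    rw [← rpow_mul (hg0 z), div_mul_cancel₀ q hp0.ne']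
  simp only [hpow]
  exact rpow_add_rpow_root_subadditive hf0 (fun z => rpow_nonneg (hg0 z) _) hf
    (rpow_subadditive hg0 hg (div_nonneg hq0 hp0.le) ((div_le_one hp0).2 hqp)) hp x y

end Subadditive

theorem stmt_11_general
    (V1 V2 V3 : Type*)
    [NormedAddCommGroup V1]
    [NormedAddCommGroup V2]
    [NormedAddCommGroup V3]
    (X Y : V1 × V2 × V3) :
    (‖(X + Y).1‖ ^ (6:ℕ) + ‖(X + Y).2.1‖ ^ (4:ℕ) + ‖(X + Y).2.2‖ ^ (2:ℕ)) ^ ((1:ℝ)/6) ≤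
    (‖X.1‖ ^ (6:ℕ) + ‖X.2.1‖ ^ (4:ℕ) + ‖X.2.2‖ ^ (2:ℕ)) ^ ((1:ℝ)/6) +
    (‖Y.1‖ ^ (6:ℕ) + ‖Y.2.1‖ ^ (4:ℕ) + ‖Y.2.2‖ ^ (2:ℕ)) ^ ((1:ℝ)/6) := by
  set h : V1 × V2 × V3 → ℝ := fun Z => (‖Z.2.1‖ ^ (4:ℝ) + ‖Z.2.2‖ ^ (2:ℝ)) ^ (1 / (4:ℝ))
  have h_nonneg : ∀ Z, 0 ≤ h Z := fun Z => rpow_nonneg (by positivity) _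
  have h_pow : ∀ Z, h Z ^ (4:ℝ) = ‖Z.2.1‖ ^ (4:ℕ) + ‖Z.2.2‖ ^ (2:ℕ) := fun Z => by
    rw [← rpow_mul (by positivity)]
    norm_num
  have h_subadd : ∀ Z W, h (Z + W) ≤ h Z + h W :=
    rpow_add_rpow_root_subadditive_of_le (f := fun Z : V1 × V2 × V3 => ‖Z.2.1‖)
      (g := fun Z : V1 × V2 × V3 => ‖Z.2.2‖) (fun _ => norm_nonneg _) (fun _ => norm_nonneg _)
      (fun Z W => norm_add_le Z.2.1 W.2.1) (fun Z W => norm_add_le Z.2.2 W.2.2)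
      (by norm_num) (by norm_num) (by norm_num)
  have key := rpow_add_rpow_root_subadditive_of_le (f := fun Z : V1 × V2 × V3 => ‖Z.1‖) (g := h)
    (p := 6) (q := 4) (fun _ => norm_nonneg _) h_nonneg (fun Z W => norm_add_le Z.1 W.1)
    h_subadd (by norm_num) (by norm_num) (by norm_num) X Y
  simpa only [h_pow, rpow_ofNat, add_assoc] using key

theorem stmt_11
    (V1 V2 V3 : Type*)
    [NormedAddCommGroup V1] [InnerProductSpace ℝ V1]
    [NormedAddCommGroup V2] [InnerProductSpace ℝ V2]
    [NormedAddCommGroup V3] [InnerProductSpace ℝ V3]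
    (X Y : V1 × V2 × V3) :
    (‖(X + Y).1‖ ^ (6:ℕ) + ‖(X + Y).2.1‖ ^ (4:ℕ) + ‖(X + Y).2.2‖ ^ (2:ℕ)) ^ ((1:ℝ)/6) ≤
    (‖X.1‖ ^ (6:ℕ) + ‖X.2.1‖ ^ (4:ℕ) + ‖X.2.2‖ ^ (2:ℕ)) ^ ((1:ℝ)/6) +
    (‖Y.1‖ ^ (6:ℕ) + ‖Y.2.1‖ ^ (4:ℕ) + ‖Y.2.2‖ ^ (2:ℕ)) ^ ((1:ℝ)/6) :=
  stmt_11_general V1 V2 V3 X Y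
end
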